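/- arXiv:2605.07784 — 10 statements merged into one kernel-verified Lean document; each statement's English description precedes it below -/
import Mathlib

section
/- Suppose M is partitioned as M = [M₁; M₂] (stacked blocks) with M₁ having full column rank. Then R(M, F) equals the set of vectors obtained from R(M₁, [F; M₂]) by projecting onto the first n coordinates, i.e., p ∈ R(M,F) if and only if there exists q₂ such that [p | −q₂] ∈ R(M₁, [F; M₂]). -/
/-- `v` lies in the row lattice of `M`, i.e. `v = q * M` for some integer row `q`. -/
def inRowLattice {l m : Type*} [Fintype l] (M : Matrix l m ℤ) (v : m → ℤ) : Prop :=
  ∃ q : l → ℤ, v = Matrix.vecMul q M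

/-- The integer relations lattice `R(M,F) = { p | p*F = 0 mod M }`. -/
def relLattice {l n m : Type*} [Fintype l] [Fintype n] (M : Matrix l m ℤ)
    (F : Matrix n m ℤ) : Set (n → ℤ) :=
  { p | inRowLattice M (Matrix.vecMul p F) }

/-- A square integer matrix in (row) Hermite form. -/
def IsHermiteForm {k : ℕ} (H : Matrix (Fin k) (Fin k) ℤ) : Prop :=
  (∀ i j : Fin k, (j : ℕ) < (i : ℕ) → H i j = 0) ∧ (∀ i, 0 < H i i) ∧
    ∀ i j : Fin k, (i : ℕ) < (j : ℕ) → 0 ≤ H i j ∧ H i j < H j j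

/-- `P` is a basis of the lattice `L`: nonsingular and its row lattice equals `L`. -/
def IsBasisOf {n : ℕ} (P : Matrix (Fin n) (Fin n) ℤ) (L : Set (Fin n → ℤ)) : Prop :=
  P.det ≠ 0 ∧ ∀ v, inRowLattice P v ↔ v ∈ L

/-- A nonsingular diagonal matrix in Smith form (positive diagonal, divisibility chain). -/
def IsSmithForm {m : ℕ} (S : Matrix (Fin m) (Fin m) ℤ) : Prop :=
  (∀ i j : Fin m, i ≠ j → S i j = 0) ∧ (∀ i, 0 < S i i) ∧
    ∀ i j : Fin m, i ≤ j → S i i ∣ S j j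

/-- `S` is the Smith normal form of `M`. -/
def IsSmithFormOf {m : ℕ} (S M : Matrix (Fin m) (Fin m) ℤ) : Prop :=
  IsSmithForm S ∧ ∃ U V : Matrix (Fin m) (Fin m) ℤ,
    IsUnit U.det ∧ IsUnit V.det ∧ U * M * V = S

theorem stmt5 {l1 l2 m n : ℕ} (M₁ : Matrix (Fin l1) (Fin m) ℤ)
    (M₂ : Matrix (Fin l2) (Fin m) ℤ)
    (hM₁ : LinearIndependent ℤ (fun j : Fin m => fun i : Fin l1 => M₁ i j))
    (F : Matrix (Fin n) (Fin m) ℤ) (p : Fin n → ℤ) :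
    p ∈ relLattice (Matrix.fromRows M₁ M₂) F ↔
      ∃ q₂ : Fin l2 → ℤ, Sum.elim p (-q₂) ∈ relLattice M₁ (Matrix.fromRows F M₂) := by
  constructor
  · rintro ⟨q, hq⟩
    refine ⟨q ∘ Sum.inr, q ∘ Sum.inl, ?_⟩
    rw [Matrix.sumElim_vecMul_fromRows]
    have : q = Sum.elim (q ∘ Sum.inl) (q ∘ Sum.inr) := (Sum.elim_comp_inl_inr q).symm
    rw [this, Matrix.sumElim_vecMul_fromRows] at hq
    rw [Matrix.neg_vecMul, hq]
    ring
  · rintro ⟨q₂, q₁, hq⟩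
    refine ⟨Sum.elim q₁ q₂, ?_⟩
    rw [Matrix.sumElim_vecMul_fromRows] at hq ⊢
    rw [Matrix.neg_vecMul] at hq
    linear_combination hq
end

section
/- Let the matrix [[M, 0],[F, I]] (block lower triangular with M ∈ ℤ^{ℓ×m} full column rank and F ∈ ℤ^{n×m}) have Hermite form with trailing n×n diagonal block H. Then the row lattice generated by H equals R(M, F). -/
lemma hermite_det_ne_zero {k : ℕ} {T : Matrix (Fin k) (Fin k) ℤ}
    (hT : IsHermiteForm T) : T.det ≠ 0 := by
  have : T.BlockTriangular id := fun i j h => hT.1 i j h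
  rw [Matrix.det_of_upperTriangular this]
  exact Finset.prod_ne_zero_iff.2 fun i _ => (hT.2.1 i).ne'

theorem stmt6 {l m n : ℕ} (M : Matrix (Fin l) (Fin m) ℤ)
    (hM : LinearIndependent ℤ (fun j : Fin m => fun i : Fin l => M i j))
    (F : Matrix (Fin n) (Fin m) ℤ)
    (T : Matrix (Fin m) (Fin m) ℤ) (X : Matrix (Fin m) (Fin n) ℤ)
    (H : Matrix (Fin n) (Fin n) ℤ)
    (hT : IsHermiteForm T) (hH : IsHermiteForm H)
    (hX : ∀ i j, 0 ≤ X i j ∧ X i j < H j j)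
    (hlat : ∀ v : Fin m ⊕ Fin n → ℤ,
      inRowLattice (Matrix.fromBlocks T X 0 H) v ↔
        inRowLattice (Matrix.fromBlocks M 0 F 1) v) :
    ∀ v : Fin n → ℤ, inRowLattice H v ↔ v ∈ relLattice M F := by
  intro v
  constructor
  · rintro ⟨q, rfl⟩
    have h1 : inRowLattice (Matrix.fromBlocks T X 0 H) (Sum.elim 0 (Matrix.vecMul q H)) := by
      refine ⟨Sum.elim 0 q, ?_⟩
      rw [Matrix.vecMul_fromBlocks]
      ext (i | i) <;> simp
    obtain ⟨p, hp⟩ := (hlat _).1 h1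
    rw [Matrix.vecMul_fromBlocks] at hp
    have hl : ∀ i, (0:ℤ) = (Matrix.vecMul (p ∘ Sum.inl) M + Matrix.vecMul (p ∘ Sum.inr) F) i :=
      fun i => by simpa using congrFun hp (Sum.inl i)
    have hb : p ∘ Sum.inr = Matrix.vecMul q H := by
      ext i; simpa using (congrFun hp (Sum.inr i)).symm
    refine ⟨-(p ∘ Sum.inl), ?_⟩
    rw [← hb]
    funext i
    have := hl i
    simp [Matrix.neg_vecMul, Pi.neg_apply] at *
    linarith
  · rintro ⟨q, hq⟩
    have h1 : inRowLattice (Matrix.fromBlocks M 0 F 1) (Sum.elim 0 v) := by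
      refine ⟨Sum.elim (-q) v, ?_⟩
      rw [Matrix.vecMul_fromBlocks]
      ext (i | i)
      · have := congrFun hq i
        simp [Matrix.neg_vecMul, Pi.neg_apply]
        linarith
      · simp
    obtain ⟨p, hp⟩ := (hlat _).2 h1
    rw [Matrix.vecMul_fromBlocks] at hp
    have hl : Matrix.vecMul (p ∘ Sum.inl) T = 0 := by
      ext i; simpa using (congrFun hp (Sum.inl i)).symm
    have hz : p ∘ Sum.inl = 0 :=
      Matrix.eq_zero_of_vecMul_eq_zero (hermite_det_ne_zero hT) hl
    refine ⟨p ∘ Sum.inr, ?_⟩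
    funext i
    have := congrFun hp (Sum.inr i)
    simp [show p ∘ Sum.inl = 0 from hz] at this
    simpa using this
end

section
/- If H₂ and H₁ are nonsingular integer matrices such that H₂H₁ is a basis for R(M,F), then H₁ is a basis for R([M; H₁F], F). (Basis means a nonsingular integer matrix whose row lattice equals the relations lattice, equivalently of minimal |det| among integer matrices P with PF = 0 mod the modulus.) -/
theorem stmt7 {l m n : ℕ} (M : Matrix (Fin l) (Fin m) ℤ)
    (hM : LinearIndependent ℤ (fun j : Fin m => fun i : Fin l => M i j))
    (F : Matrix (Fin n) (Fin m) ℤ)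
    (H₁ H₂ : Matrix (Fin n) (Fin n) ℤ)
    (h1 : H₁.det ≠ 0) (h2 : H₂.det ≠ 0)
    (hbasis : IsBasisOf (H₂ * H₁) (relLattice M F)) :
    IsBasisOf H₁ (relLattice (Matrix.fromRows M (H₁ * F)) F) := by
  obtain ⟨hdet, hmem⟩ := hbasis
  refine ⟨h1, fun v => ?_⟩
  constructor
  · rintro ⟨p, rfl⟩
    exact ⟨Sum.elim 0 p, by
      simp [Matrix.vecMul_vecMul]⟩
  · rintro ⟨q, hq⟩
    have hq' : Matrix.vecMul v F = Matrix.vecMul (q ∘ Sum.inl) M +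
        Matrix.vecMul (q ∘ Sum.inr) (H₁ * F) := by
      rw [hq, ← Matrix.sumElim_vecMul_fromRows, Sum.elim_comp_inl_inr]
    have hrel : (v - Matrix.vecMul (q ∘ Sum.inr) H₁) ∈ relLattice M F := by
      refine ⟨q ∘ Sum.inl, ?_⟩
      rw [Matrix.sub_vecMul, hq', Matrix.vecMul_vecMul]
      abel
    obtain ⟨r, hr⟩ := (hmem _).mpr hrel
    refine ⟨Matrix.vecMul r H₂ + q ∘ Sum.inr, ?_⟩
    have : v = Matrix.vecMul r (H₂ * H₁) + Matrix.vecMul (q ∘ Sum.inr) H₁ := by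
      rw [← hr]; abel
    rw [this, Matrix.add_vecMul, ← Matrix.vecMul_vecMul]
end

section
/- If H₂ and H₁ are nonsingular integer matrices such that H₂H₁ is a basis for R(M,F), then H₂ is a basis for R(M, H₁F). -/
theorem stmt8 {l m n : ℕ} (M : Matrix (Fin l) (Fin m) ℤ)
    (hM : LinearIndependent ℤ (fun j : Fin m => fun i : Fin l => M i j))
    (F : Matrix (Fin n) (Fin m) ℤ)
    (H₁ H₂ : Matrix (Fin n) (Fin n) ℤ)
    (h1 : H₁.det ≠ 0) (h2 : H₂.det ≠ 0)
    (hbasis : IsBasisOf (H₂ * H₁) (relLattice M F)) :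
    IsBasisOf H₂ (relLattice M (H₁ * F)) := by
  obtain ⟨hdet, hiff⟩ := hbasis
  refine ⟨h2, fun v => ?_⟩
  constructor
  · rintro ⟨q, rfl⟩
    have h := (hiff (Matrix.vecMul q (H₂ * H₁))).mp ⟨q, rfl⟩
    simpa [relLattice, Matrix.vecMul_vecMul, Matrix.mul_assoc] using h
  · intro hv
    have hv' : Matrix.vecMul v H₁ ∈ relLattice M F := by
      simpa [relLattice, Matrix.vecMul_vecMul] using hv
    obtain ⟨q, hq⟩ := (hiff (Matrix.vecMul v H₁)).mpr hv'
    refine ⟨q, ?_⟩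
    have hq' : Matrix.vecMul (v - Matrix.vecMul q H₂) H₁ = 0 := by
      rw [Matrix.sub_vecMul, hq, Matrix.vecMul_vecMul, sub_self]
    have hz : v - Matrix.vecMul q H₂ = 0 := by
      have h3 : Matrix.vecMul (v - Matrix.vecMul q H₂) (H₁ * H₁.adjugate) = 0 := by
        rw [← Matrix.vecMul_vecMul, hq', Matrix.zero_vecMul]
      rw [Matrix.mul_adjugate] at h3
      funext i
      have := congrFun h3 i
      simp [Matrix.vecMul_smul, Matrix.vecMul_one] at this
      rcases this with h | h
      · simpa using h
      · exact absurd h h1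
    have := sub_eq_zero.mp hz
    exact this
end

section
/- Let M ∈ ℤ^{m×m} be nonsingular with Smith form S, and let (S,F) be a Smith massager for M, i.e., MF ≡ 0 mod S (column-wise) and there exists W with WF ≡ I mod S. Then the lattices { v ∈ ℤ^{1×m} : v M^{-1} ∈ ℤ^{1×m} } and { v ∈ ℤ^{1×m} : v F S^{-1} ∈ ℤ^{1×m} } are equal; in particular the Hermite form of M equals the Hermite basis of R(S,F). -/
section Aux

variable {m : ℕ}

lemma vecMul_apply' {R : Type*} [CommRing R] {l n : Type*} [Fintype l]
    (q : l → R) (A : Matrix l n R) (j : n) :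
    Matrix.vecMul q A j = ∑ i, q i * A i j := by
  simp [Matrix.vecMul, dotProduct]

/-- Characterization of the row lattice of a diagonal matrix. -/
lemma rowLattice_diag_iff (S : Matrix (Fin m) (Fin m) ℤ)
    (hdiag : ∀ i j : Fin m, i ≠ j → S i j = 0) (w : Fin m → ℤ) :
    inRowLattice S w ↔ ∀ j, S j j ∣ w j := by
  constructor
  · rintro ⟨q, rfl⟩ j
    rw [vecMul_apply', Finset.sum_eq_single j
      (fun i _ hi => by rw [hdiag i j hi, mul_zero])
      (fun h => absurd (Finset.mem_univ j) h)]
    exact Dvd.intro_left _ rfl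
  · intro h
    choose t ht using h
    refine ⟨t, funext fun j => ?_⟩
    rw [vecMul_apply', Finset.sum_eq_single j
      (fun i _ hi => by rw [hdiag i j hi, mul_zero])
      (fun h => absurd (Finset.mem_univ j) h), ht j, mul_comm]

/-- Key injectivity lemma: if right multiplication by `N` preserves the congruence
lattice mod `s` and `N` has a left inverse mod `s`, then `y*N ≡ 0` implies `y ≡ 0`. -/
lemma key_inj (s : Fin m → ℤ) (hs : ∀ j, 0 < s j)
    (N W' : Matrix (Fin m) (Fin m) ℤ)
    (ha : ∀ i j, s j ∣ s i * N i j)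
    (hb : ∀ i j, s j ∣ (W' * N - 1) i j)
    (y : Fin m → ℤ) (hy : ∀ j, s j ∣ Matrix.vecMul y N j) :
    ∀ j, s j ∣ y j := by
  haveI : ∀ j, NeZero (s j).natAbs := fun j => ⟨Int.natAbs_ne_zero.mpr (hs j).ne'⟩
  let Q := ∀ j : Fin m, ZMod (s j).natAbs
  let π : (Fin m → ℤ) → Q := fun z j => ((z j : ZMod (s j).natAbs))
  have hπeq : ∀ z z' : Fin m → ℤ, π z = π z' ↔ ∀ j, s j ∣ z' j - z j := by
    intro z z'
    constructor
    · intro h j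
      have := congrFun h j
      rw [ZMod.intCast_eq_intCast_iff, Int.modEq_iff_dvd] at this
      exact Int.natAbs_dvd.mp this
    · intro h
      funext j
      rw [ZMod.intCast_eq_intCast_iff, Int.modEq_iff_dvd]
      exact Int.natAbs_dvd.mpr (h j)
  have hπ0 : ∀ z : Fin m → ℤ, π z = 0 ↔ ∀ j, s j ∣ z j := by
    intro z
    have h0 : (0 : Q) = π (0 : Fin m → ℤ) := funext fun j => by
      show (0 : ZMod (s j).natAbs) = (((0 : Fin m → ℤ) j : ℤ) : ZMod (s j).natAbs)
      simp
    rw [h0, hπeq]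
    refine forall_congr' fun j => ?_
    rw [Pi.zero_apply, zero_sub, dvd_neg]
  -- right multiplication by N is well defined mod s
  have hcong : ∀ z z' : Fin m → ℤ, π z = π z' →
      π (Matrix.vecMul z N) = π (Matrix.vecMul z' N) := by
    intro z z' h
    rw [hπeq] at h ⊢
    intro j
    have hdiff : Matrix.vecMul z' N j - Matrix.vecMul z N j = ∑ i, (z' i - z i) * N i j := by
      rw [vecMul_apply', vecMul_apply', ← Finset.sum_sub_distrib]
      exact Finset.sum_congr rfl fun i _ => by ring
    rw [hdiff]
    refine Finset.dvd_sum fun i _ => ?_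
    obtain ⟨t, ht⟩ := h i
    have : (z' i - z i) * N i j = t * (s i * N i j) := by rw [ht]; ring
    rw [this]
    exact (ha i j).mul_left t
  -- section of π
  let σ : Q → (Fin m → ℤ) := fun x j => ((x j).val : ℤ)
  have hσ : ∀ x : Q, π (σ x) = x := by
    intro x
    funext j
    show (((((x j).val : ℤ))) : ZMod (s j).natAbs) = x j
    rw [Int.cast_natCast, ZMod.natCast_val, ZMod.cast_id]
  let f : Q → Q := fun x => π (Matrix.vecMul (σ x) N)
  have hf : ∀ z, f (π z) = π (Matrix.vecMul z N) := fun z => hcong _ _ (hσ (π z))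
  have hfsurj : Function.Surjective f := by
    intro x
    refine ⟨π (Matrix.vecMul (σ x) W'), ?_⟩
    rw [hf, Matrix.vecMul_vecMul]
    have key : π (Matrix.vecMul (σ x) (W' * N)) = π (σ x) := by
      rw [hπeq]
      intro j
      rw [dvd_sub_comm]
      have hdd : Matrix.vecMul (σ x) (W' * N) j - σ x j
          = Matrix.vecMul (σ x) (W' * N - 1) j := by
        rw [Matrix.vecMul_sub, Matrix.vecMul_one, Pi.sub_apply]
      rw [hdd, vecMul_apply']
      exact Finset.dvd_sum fun i _ => (hb i j).mul_left _
    rw [key, hσ]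
  haveI : Finite Q := by infer_instance
  have hfinj : Function.Injective f := Finite.injective_iff_surjective.mpr hfsurj
  have h0 : f (π y) = f (π 0) := by
    rw [hf, hf, (hπ0 _).mpr hy]
    rw [Matrix.zero_vecMul]
    exact ((hπ0 0).mpr fun j => dvd_zero _).symm
  have hyz := hfinj h0
  rw [hπeq] at hyz
  intro j
  have := hyz j
  simp only [Pi.zero_apply, zero_sub] at this
  exact (dvd_neg).mp this

/-- Core lemma: the row lattice of `M` equals `R(S,F)`. -/
lemma rowLattice_eq_rel (M S F : Matrix (Fin m) (Fin m) ℤ)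
    (hM : M.det ≠ 0) (hSM : IsSmithFormOf S M)
    (hmass1 : ∀ i j, S j j ∣ (M * F) i j)
    (hmass2 : ∃ W : Matrix (Fin m) (Fin m) ℤ, ∀ i j, S j j ∣ (W * F - 1) i j) :
    ∀ v, inRowLattice M v ↔ v ∈ relLattice S F := by
  obtain ⟨⟨hdiag, hpos, _⟩, U, V, hU, hV, hUMV⟩ := hSM
  obtain ⟨W, hW⟩ := hmass2
  haveI := Matrix.invertibleOfIsUnitDet U hU
  haveI := Matrix.invertibleOfIsUnitDet V hV
  intro v
  constructor
  · rintro ⟨q, rfl⟩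
    rw [relLattice, Set.mem_setOf_eq, Matrix.vecMul_vecMul, rowLattice_diag_iff S hdiag]
    intro j
    rw [vecMul_apply']
    exact Finset.dvd_sum fun i _ => (hmass1 i j).mul_left _
  · intro hv
    rw [relLattice, Set.mem_setOf_eq, rowLattice_diag_iff S hdiag] at hv
    set N : Matrix (Fin m) (Fin m) ℤ := ⅟V * F with hN
    have hFVN : V * N = F := by
      rw [hN, ← Matrix.mul_assoc, mul_invOf_self, Matrix.one_mul]
    have hUM : U * M = S * ⅟V := by
      have h := congrArg (fun A => A * ⅟V) hUMV
      simpa [Matrix.mul_assoc, mul_invOf_self] using h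
    have hSN : S * N = U * (M * F) := by
      rw [hN, ← Matrix.mul_assoc, ← hUM, Matrix.mul_assoc]
    have ha : ∀ i j, S j j ∣ S i i * N i j := by
      intro i j
      have h1 : (S * N) i j = S i i * N i j := by
        rw [Matrix.mul_apply, Finset.sum_eq_single i
          (fun k _ hk => by rw [hdiag i k (Ne.symm hk), zero_mul])
          (fun h => absurd (Finset.mem_univ i) h)]
      rw [← h1, hSN, Matrix.mul_apply]
      exact Finset.dvd_sum fun k _ => (hmass1 k j).mul_left _
    have hb : ∀ i j, S j j ∣ ((W * V) * N - 1) i j := by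
      intro i j
      have h2 : (W * V) * N = W * F := by rw [Matrix.mul_assoc, hFVN]
      rw [h2]
      exact hW i j
    have hyN : ∀ j, S j j ∣ Matrix.vecMul (Matrix.vecMul v V) N j := by
      intro j
      rw [Matrix.vecMul_vecMul, hFVN]
      exact hv j
    have hy := key_inj (fun j => S j j) hpos N (W * V) ha hb (Matrix.vecMul v V) hyN
    choose t ht using hy
    refine ⟨Matrix.vecMul t U, ?_⟩
    have h1 : Matrix.vecMul t S = Matrix.vecMul v V := by
      funext j
      rw [vecMul_apply', Finset.sum_eq_single j
        (fun i _ hi => by rw [hdiag i j hi, mul_zero])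
        (fun h => absurd (Finset.mem_univ j) h), ht j, mul_comm]
    calc v = Matrix.vecMul (Matrix.vecMul v V) ⅟V := by
            rw [Matrix.vecMul_vecMul, mul_invOf_self, Matrix.vecMul_one]
      _ = Matrix.vecMul (Matrix.vecMul t S) ⅟V := by rw [h1]
      _ = Matrix.vecMul (Matrix.vecMul t U) M := by
            rw [Matrix.vecMul_vecMul, Matrix.vecMul_vecMul, ← hUM]

lemma castRow_vecMul (v : Fin m → ℤ) (A : Matrix (Fin m) (Fin m) ℤ) :
    (fun j => ((Matrix.vecMul v A) j : ℚ)) =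
      Matrix.vecMul (fun i => (v i : ℚ)) (A.map (Int.cast : ℤ → ℚ)) := by
  funext j
  rw [vecMul_apply', vecMul_apply']
  push_cast
  simp [Matrix.map_apply]

lemma left_char (M : Matrix (Fin m) (Fin m) ℤ) (hM : M.det ≠ 0) (v : Fin m → ℤ) :
    (∀ j, ∃ z : ℤ, Matrix.vecMul (fun i => (v i : ℚ))
        (M.map (Int.cast : ℤ → ℚ))⁻¹ j = (z : ℚ)) ↔ inRowLattice M v := by
  set Mq := M.map (Int.cast : ℤ → ℚ) with hMq
  have hdet : Mq.det = (M.det : ℚ) := by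
    rw [hMq]
    rw [show M.map (Int.cast : ℤ → ℚ) = (Int.castRingHom ℚ).mapMatrix M from rfl]
    exact ((Int.castRingHom ℚ).map_det M).symm
  have hunit : IsUnit Mq.det := by
    rw [hdet, isUnit_iff_ne_zero]
    exact_mod_cast hM
  constructor
  · intro h
    choose z hz using h
    have h1 : Matrix.vecMul (fun i => (v i : ℚ)) Mq⁻¹ = fun i => (z i : ℚ) := funext hz
    have hvq : (fun i => (v i : ℚ)) = Matrix.vecMul (fun i => (z i : ℚ)) Mq := by
      calc (fun i => (v i : ℚ))
          = Matrix.vecMul (fun i => (v i : ℚ)) (Mq⁻¹ * Mq) := by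
            rw [Matrix.nonsing_inv_mul Mq hunit, Matrix.vecMul_one]
        _ = Matrix.vecMul (Matrix.vecMul (fun i => (v i : ℚ)) Mq⁻¹) Mq := by
            rw [Matrix.vecMul_vecMul]
        _ = Matrix.vecMul (fun i => (z i : ℚ)) Mq := by rw [h1]
    rw [← castRow_vecMul] at hvq
    refine ⟨z, funext fun j => ?_⟩
    exact_mod_cast congrFun hvq j
  · rintro ⟨q, rfl⟩ j
    refine ⟨q j, ?_⟩
    rw [show (fun i => ((Matrix.vecMul q M) i : ℚ))
        = Matrix.vecMul (fun i => (q i : ℚ)) Mq from castRow_vecMul q M,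
      Matrix.vecMul_vecMul, Matrix.mul_nonsing_inv Mq hunit, Matrix.vecMul_one]

lemma right_char (S F : Matrix (Fin m) (Fin m) ℤ)
    (hdiag : ∀ i j : Fin m, i ≠ j → S i j = 0) (hpos : ∀ i, 0 < S i i) (v : Fin m → ℤ) :
    (∀ j, ∃ z : ℤ, Matrix.vecMul (fun i => (v i : ℚ))
        (F.map (Int.cast : ℤ → ℚ) * (S.map (Int.cast : ℤ → ℚ))⁻¹) j = (z : ℚ))
      ↔ v ∈ relLattice S F := by
  have hSq : S.map (Int.cast : ℤ → ℚ) = Matrix.diagonal (fun i => (S i i : ℚ)) := by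
    ext i j
    by_cases h : i = j
    · subst h; simp [Matrix.map_apply]
    · simp [Matrix.map_apply, Matrix.diagonal_apply_ne _ h, hdiag i j h]
  have hSinv : (S.map (Int.cast : ℤ → ℚ))⁻¹ = Matrix.diagonal (fun i => ((S i i : ℚ))⁻¹) := by
    apply Matrix.inv_eq_right_inv
    rw [hSq, Matrix.diagonal_mul_diagonal,
      show (1 : Matrix (Fin m) (Fin m) ℚ) = Matrix.diagonal (fun _ => 1) from
        Matrix.diagonal_one.symm]
    have hfun : (fun i => ((S i i : ℚ)) * ((S i i : ℚ))⁻¹) = fun _ => (1 : ℚ) := by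
      funext i
      have hne : ((S i i : ℚ)) ≠ 0 := by exact_mod_cast (hpos i).ne'
      exact mul_inv_cancel₀ hne
    rw [hfun]
  have hrw : ∀ j, Matrix.vecMul (fun i => (v i : ℚ))
      (F.map (Int.cast : ℤ → ℚ) * (S.map (Int.cast : ℤ → ℚ))⁻¹) j
      = ((Matrix.vecMul v F j : ℤ) : ℚ) * ((S j j : ℚ))⁻¹ := by
    intro j
    rw [← Matrix.vecMul_vecMul, ← castRow_vecMul, hSinv, Matrix.vecMul_diagonal]
  rw [show (v ∈ relLattice S F) = inRowLattice S (Matrix.vecMul v F) from rfl,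
    rowLattice_diag_iff S hdiag]
  constructor
  · intro h j
    obtain ⟨z, hz⟩ := h j
    rw [hrw j, ← div_eq_mul_inv, div_eq_iff (by exact_mod_cast (hpos j).ne' : ((S j j : ℚ)) ≠ 0)] at hz
    have h2 : Matrix.vecMul v F j = z * S j j := by exact_mod_cast hz
    rw [h2]
    exact dvd_mul_left _ _
  · intro h j
    obtain ⟨z, hz⟩ := h j
    refine ⟨z, ?_⟩
    rw [hrw j, hz]
    have hne : ((S j j : ℚ)) ≠ 0 := by exact_mod_cast (hpos j).ne'
    push_cast
    field_simp

lemma rowLattice_self (P : Matrix (Fin m) (Fin m) ℤ) (i : Fin m) :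
    inRowLattice P (fun j => P i j) := by
  refine ⟨fun k => if k = i then 1 else 0, funext fun j => ?_⟩
  rw [vecMul_apply']
  simp [ite_mul]

end Aux

theorem stmt9 {m : ℕ} (M S F : Matrix (Fin m) (Fin m) ℤ)
    (hM : M.det ≠ 0) (hSM : IsSmithFormOf S M)
    (hmass1 : ∀ i j, S j j ∣ (M * F) i j)
    (hmass2 : ∃ W : Matrix (Fin m) (Fin m) ℤ, ∀ i j, S j j ∣ (W * F - 1) i j) :
    ({ v : Fin m → ℤ | ∀ j, ∃ z : ℤ,
        Matrix.vecMul (fun i => (v i : ℚ)) (M.map (Int.cast : ℤ → ℚ))⁻¹ j = (z : ℚ) } =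
      { v : Fin m → ℤ | ∀ j, ∃ z : ℤ,
        Matrix.vecMul (fun i => (v i : ℚ))
          (F.map (Int.cast : ℤ → ℚ) * (S.map (Int.cast : ℤ → ℚ))⁻¹) j = (z : ℚ) }) ∧
    ∀ H : Matrix (Fin m) (Fin m) ℤ, IsHermiteForm H →
      ((∃ U : Matrix (Fin m) (Fin m) ℤ, IsUnit U.det ∧ U * M = H) ↔
        IsBasisOf H (relLattice S F)) := by
  have hcore := rowLattice_eq_rel M S F hM hSM hmass1 hmass2
  constructor
  · ext v
    simp only [Set.mem_setOf_eq]
    rw [left_char M hM v, right_char S F hSM.1.1 hSM.1.2.1 v]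
    exact hcore v
  · intro H _
    constructor
    · rintro ⟨U0, hU0, rfl⟩
      haveI := Matrix.invertibleOfIsUnitDet U0 hU0
      refine ⟨by rw [Matrix.det_mul]; exact mul_ne_zero hU0.ne_zero hM, fun v => ?_⟩
      rw [← hcore v]
      constructor
      · rintro ⟨q, rfl⟩
        exact ⟨Matrix.vecMul q U0, by rw [Matrix.vecMul_vecMul]⟩
      · rintro ⟨q, rfl⟩
        refine ⟨Matrix.vecMul q ⅟U0, ?_⟩
        rw [Matrix.vecMul_vecMul, ← Matrix.mul_assoc, invOf_mul_self, Matrix.one_mul]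
    · rintro ⟨hdet, hbasis⟩
      have hrowsH : ∀ i, inRowLattice M (fun j => H i j) :=
        fun i => (hcore _).mpr ((hbasis _).mp (rowLattice_self H i))
      have hrowsM : ∀ i, inRowLattice H (fun j => M i j) :=
        fun i => (hbasis _).mpr ((hcore _).mp (rowLattice_self M i))
      choose A hA using hrowsH
      choose B hB using hrowsM
      have hAM : Matrix.of A * M = H := by
        ext i j
        rw [Matrix.mul_apply]
        have h1 := congrFun (hA i) j
        rw [vecMul_apply'] at h1
        exact h1.symm
      have hBH : Matrix.of B * H = M := by
        ext i j
        rw [Matrix.mul_apply]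
        have h1 := congrFun (hB i) j
        rw [vecMul_apply'] at h1
        exact h1.symm
      have hABH : (Matrix.of A * Matrix.of B) * H = H := by
        rw [Matrix.mul_assoc, hBH, hAM]
      have hdet1 : (Matrix.of A).det * (Matrix.of B).det = 1 := by
        have h2 := congrArg Matrix.det hABH
        rw [Matrix.det_mul, Matrix.det_mul] at h2
        have h3 : ((Matrix.of A).det * (Matrix.of B).det) * H.det = 1 * H.det := by
          rw [one_mul]; exact h2
        exact mul_right_cancel₀ hdet h3
      exact ⟨Matrix.of A, IsUnit.of_mul_eq_one _ hdet1, hAM⟩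
end

section
/- If M is nonsingular and (S,W) is a Smith massager for M, then R(M, F) = R(S, FW) for every integer matrix F with m columns. -/
/-- Membership in the row lattice of a nonsingular diagonal matrix is
columnwise divisibility by the diagonal entries. -/
lemma diag_inRowLattice {m : ℕ} (S : Matrix (Fin m) (Fin m) ℤ)
    (hdiag : ∀ i j : Fin m, i ≠ j → S i j = 0) (hpos : ∀ i, 0 < S i i)
    (v : Fin m → ℤ) : inRowLattice S v ↔ ∀ j, S j j ∣ v j := by
  constructor
  · rintro ⟨q, rfl⟩ j
    have h : Matrix.vecMul q S j = q j * S j j := by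
      simp only [Matrix.vecMul, dotProduct]
      refine Finset.sum_eq_single j (fun i _ hij => ?_) (fun h => absurd (Finset.mem_univ j) h)
      rw [hdiag i j hij, mul_zero]
    rw [h]
    exact Dvd.dvd.mul_left dvd_rfl (q j)
  · intro h
    refine ⟨fun j => v j / S j j, funext fun j => ?_⟩
    have hj : Matrix.vecMul (fun j => v j / S j j) S j = (v j / S j j) * S j j := by
      simp only [Matrix.vecMul, dotProduct]
      refine Finset.sum_eq_single j (fun i _ hij => ?_) (fun h => absurd (Finset.mem_univ j) h)
      rw [hdiag i j hij, mul_zero]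
    rw [hj, Int.ediv_mul_cancel (h j)]

/-- Core counting lemma: if `X` has a left inverse `Y` modulo `S` (columnwise),
`S * X ≡ 0 (cmod S)`, and `u * X ≡ 0 (cmod S)`, then `u ≡ 0 (cmod S)`. -/
lemma core_lemma {m : ℕ} (S X Y : Matrix (Fin m) (Fin m) ℤ)
    (hpos : ∀ i, 0 < S i i)
    (ha : ∀ k j : Fin m, S j j ∣ S k k * X k j)
    (hb : ∀ i j : Fin m, S j j ∣ (Y * X - 1) i j)
    (u : Fin m → ℤ) (hc : ∀ j, S j j ∣ Matrix.vecMul u X j) :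
    ∀ j, S j j ∣ u j := by
  classical
  set nn : Fin m → ℕ := fun j => (S j j).natAbs with hnn
  haveI : ∀ j, NeZero (nn j) := fun j => ⟨Int.natAbs_ne_zero.mpr (hpos j).ne'⟩
  have hnat : ∀ j, ((nn j : ℕ) : ℤ) = S j j := fun j => Int.natAbs_of_nonneg (hpos j).le
  have hzero : ∀ (j : Fin m) (a : ℤ), ((a : ZMod (nn j)) = 0 ↔ S j j ∣ a) := by
    intro j a
    rw [ZMod.intCast_zmod_eq_zero_iff_dvd, hnat]
  set res : (Fin m → ℤ) → ∀ j, ZMod (nn j) := fun w j => ((w j : ℤ) : ZMod (nn j)) with hres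
  set Fh : (Fin m → ℤ) → ∀ j, ZMod (nn j) := fun w => res (Matrix.vecMul w X) with hFh
  -- `Fh` only depends on `w` modulo `S` coordinatewise
  have welldef : ∀ w w' : Fin m → ℤ, (∀ k, S k k ∣ w k - w' k) → Fh w = Fh w' := by
    intro w w' h
    funext j
    have hdvd : S j j ∣ Matrix.vecMul w X j - Matrix.vecMul w' X j := by
      have heq : Matrix.vecMul w X j - Matrix.vecMul w' X j
          = ∑ k, (w k - w' k) * X k j := by
        simp [Matrix.vecMul, dotProduct, sub_mul, Finset.sum_sub_distrib]
      rw [heq]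
      refine Finset.dvd_sum fun k _ => ?_
      obtain ⟨c, hck⟩ := h k
      rw [hck, mul_comm (S k k) c, mul_assoc]
      exact Dvd.dvd.mul_left (ha k j) c
    have h0 : ((Matrix.vecMul w X j - Matrix.vecMul w' X j : ℤ) : ZMod (nn j)) = 0 :=
      (hzero j _).mpr hdvd
    rw [Int.cast_sub] at h0
    exact sub_eq_zero.mp h0
  set lift : (∀ j, ZMod (nn j)) → (Fin m → ℤ) := fun g k => ((g k).val : ℤ) with hlift
  have hliftg : ∀ (g : ∀ j, ZMod (nn j)) (k : Fin m),
      ((lift g k : ℤ) : ZMod (nn k)) = g k := by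
    intro g k
    simp only [hlift, Int.cast_natCast]
    exact ZMod.natCast_rightInverse (g k)
  have hliftres : ∀ (w : Fin m → ℤ) (k : Fin m), S k k ∣ lift (res w) k - w k := by
    intro w k
    rw [← hzero k, Int.cast_sub, hliftg (res w) k]
    exact sub_eq_zero.mpr rfl
  set f : (∀ j, ZMod (nn j)) → ∀ j, ZMod (nn j) := fun g => Fh (lift g) with hf
  have hsurj : Function.Surjective f := by
    intro g
    refine ⟨res (Matrix.vecMul (lift g) Y), ?_⟩
    have h1 : f (res (Matrix.vecMul (lift g) Y)) = Fh (Matrix.vecMul (lift g) Y) :=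
      welldef _ _ (fun k => hliftres _ k)
    rw [h1]
    funext j
    have h2 : Matrix.vecMul (Matrix.vecMul (lift g) Y) X
        = Matrix.vecMul (lift g) (Y * X) := Matrix.vecMul_vecMul _ Y X
    have h3 : Matrix.vecMul (lift g) (Y * X)
        = lift g + Matrix.vecMul (lift g) (Y * X - 1) := by
      rw [Matrix.vecMul_sub, Matrix.vecMul_one]
      abel
    have h4 : S j j ∣ Matrix.vecMul (lift g) (Y * X - 1) j := by
      have heq : Matrix.vecMul (lift g) (Y * X - 1) j
          = ∑ i, lift g i * (Y * X - 1) i j := by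
        simp [Matrix.vecMul, dotProduct]
      rw [heq]
      exact Finset.dvd_sum fun i _ => Dvd.dvd.mul_left (hb i j) (lift g i)
    show ((Matrix.vecMul (Matrix.vecMul (lift g) Y) X j : ℤ) : ZMod (nn j)) = g j
    rw [h2, h3]
    have : ((lift g j + Matrix.vecMul (lift g) (Y * X - 1) j : ℤ) : ZMod (nn j))
        = ((lift g j : ℤ) : ZMod (nn j)) := by
      rw [Int.cast_add, (hzero j _).mpr h4, add_zero]
    rw [Pi.add_apply, this, hliftg]
  have hinj : Function.Injective f := Finite.injective_iff_surjective.mpr hsurj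
  have key : res u = res 0 := by
    apply hinj
    have e1 : f (res u) = Fh u := welldef _ _ (fun k => hliftres u k)
    have e2 : f (res 0) = Fh 0 := welldef _ _ (fun k => hliftres 0 k)
    rw [e1, e2]
    funext j
    have : ((Matrix.vecMul u X j : ℤ) : ZMod (nn j)) = 0 := (hzero j _).mpr (hc j)
    show ((Matrix.vecMul u X j : ℤ) : ZMod (nn j))
        = ((Matrix.vecMul 0 X j : ℤ) : ZMod (nn j))
    rw [this, Matrix.zero_vecMul]
    simp
  intro j
  rw [← hzero j]
  have h : ((u j : ℤ) : ZMod (nn j)) = (((0 : Fin m → ℤ) j : ℤ) : ZMod (nn j)) :=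
    congrFun key j
  simpa using h

theorem stmt10 {m n : ℕ} (M S W : Matrix (Fin m) (Fin m) ℤ)
    (hM : M.det ≠ 0) (hSM : IsSmithFormOf S M)
    (hmass1 : ∀ i j, S j j ∣ (M * W) i j)
    (hmass2 : ∃ V : Matrix (Fin m) (Fin m) ℤ, ∀ i j, S j j ∣ (V * W - 1) i j)
    (F : Matrix (Fin n) (Fin m) ℤ) :
    relLattice M F = relLattice S (F * W) := by
  classical
  obtain ⟨⟨hSdiag, hSpos, _⟩, U, V, hU, hV, hUMV⟩ := hSM
  obtain ⟨B, hB⟩ := hmass2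
  haveI : Invertible V := V.invertibleOfIsUnitDet hV
  ext p
  simp only [relLattice, Set.mem_setOf_eq]
  constructor
  · rintro ⟨q, hq⟩
    rw [diag_inRowLattice S hSdiag hSpos]
    intro j
    have h1 : Matrix.vecMul p (F * W) = Matrix.vecMul q (M * W) := by
      rw [← Matrix.vecMul_vecMul, hq, Matrix.vecMul_vecMul]
    rw [h1]
    have heq : Matrix.vecMul q (M * W) j = ∑ i, q i * (M * W) i j := by
      simp [Matrix.vecMul, dotProduct]
    rw [heq]
    exact Finset.dvd_sum fun i _ => Dvd.dvd.mul_left (hmass1 i j) (q i)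
  · intro hmem
    rw [diag_inRowLattice S hSdiag hSpos] at hmem
    set v : Fin m → ℤ := Matrix.vecMul p F with hv
    set X : Matrix (Fin m) (Fin m) ℤ := ⅟V * W with hX
    -- property (a): S * X = U * (M * W)
    have hSX : S * X = U * (M * W) := by
      rw [hX, ← hUMV]
      rw [mul_assoc (U * M) V (⅟V * W), ← mul_assoc V (⅟V) W, mul_invOf_self, one_mul,
        mul_assoc]
    have ha : ∀ k j : Fin m, S j j ∣ S k k * X k j := by
      intro k j
      have h1 : (S * X) k j = S k k * X k j := by
        rw [Matrix.mul_apply]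
        refine Finset.sum_eq_single k (fun i _ hik => ?_)
          (fun h => absurd (Finset.mem_univ k) h)
        rw [hSdiag k i (Ne.symm hik), zero_mul]
      rw [← h1, hSX, Matrix.mul_apply]
      exact Finset.dvd_sum fun i _ => Dvd.dvd.mul_left (hmass1 i j) (U k i)
    -- property (b): (B * V) * X = B * W
    have hBVX : (B * V) * X = B * W := by
      rw [hX, mul_assoc B V (⅟V * W), ← mul_assoc V (⅟V) W, mul_invOf_self, one_mul]
    have hb : ∀ i j : Fin m, S j j ∣ ((B * V) * X - 1) i j := by
      intro i j
      rw [hBVX]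
      exact hB i j
    -- property (c)
    set u : Fin m → ℤ := Matrix.vecMul v V with hu
    have hc : ∀ j, S j j ∣ Matrix.vecMul u X j := by
      have h1 : Matrix.vecMul u X = Matrix.vecMul p (F * W) := by
        rw [hu, Matrix.vecMul_vecMul, hX, ← mul_assoc V (⅟V) W, mul_invOf_self, one_mul,
          hv, Matrix.vecMul_vecMul]
      rw [h1]
      exact hmem
    have hdvd : ∀ j, S j j ∣ u j := core_lemma S X (B * V) hSpos ha hb u hc
    obtain ⟨r, hr⟩ := (diag_inRowLattice S hSdiag hSpos u).mpr hdvd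
    -- reconstruct v as a row combination of M
    refine ⟨Matrix.vecMul r U, ?_⟩
    have hSVi : S * ⅟V = U * M := by
      rw [← hUMV, mul_assoc, mul_invOf_self, mul_one]
    calc Matrix.vecMul p F = Matrix.vecMul v (V * ⅟V) := by
          rw [mul_invOf_self, Matrix.vecMul_one, hv]
      _ = Matrix.vecMul u ⅟V := by rw [← Matrix.vecMul_vecMul, hu]
      _ = Matrix.vecMul r (S * ⅟V) := by rw [hr, Matrix.vecMul_vecMul]
      _ = Matrix.vecMul (Matrix.vecMul r U) M := by
          rw [hSVi, ← Matrix.vecMul_vecMul]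
end

section
/- Let T be the Hermite basis of L(M) + L(F) (the lattice generated jointly by the rows of M and F). Then MT^{-1} and FT^{-1} are integer matrices, R(M, F) = R(MT^{-1}, FT^{-1}), and the Hermite basis of the lattice generated by the rows of MT^{-1} together with the rows of FT^{-1} is the identity (the new inputs are coprime). -/
lemma vecMul_cancel {m : ℕ} {T : Matrix (Fin m) (Fin m) ℤ} (hdet : T.det ≠ 0)
    {v w : Fin m → ℤ} (h : Matrix.vecMul v T = Matrix.vecMul w T) : v = w := by
  have h2 : Matrix.vecMul (Matrix.vecMul v T) T.adjugate
      = Matrix.vecMul (Matrix.vecMul w T) T.adjugate := by rw [h]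
  rw [Matrix.vecMul_vecMul, Matrix.vecMul_vecMul, Matrix.mul_adjugate] at h2
  funext i
  have h3 := congr_fun h2 i
  simp [Matrix.smul_vecMul, Matrix.vecMul_one, Pi.smul_apply, smul_eq_mul] at h3
  exact h3.resolve_right hdet

lemma single_vecMul' {k m : Type*} [Fintype k] [DecidableEq k] (A : Matrix k m ℤ) (r : k) :
    Matrix.vecMul (Pi.single r 1) A = A r := by
  funext j
  simp [Matrix.vecMul, dotProduct, Pi.single_apply]

theorem stmt12 {l m n : ℕ} (M : Matrix (Fin l) (Fin m) ℤ)
    (hM : LinearIndependent ℤ (fun j : Fin m => fun i : Fin l => M i j))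
    (F : Matrix (Fin n) (Fin m) ℤ)
    (T : Matrix (Fin m) (Fin m) ℤ)
    (hT : IsHermiteForm T)
    (hTlat : ∀ v : Fin m → ℤ,
      inRowLattice T v ↔ inRowLattice (Matrix.fromRows M F) v) :
    (∃ M' : Matrix (Fin l) (Fin m) ℤ, M' * T = M) ∧
    (∃ F' : Matrix (Fin n) (Fin m) ℤ, F' * T = F) ∧
    ∀ (M' : Matrix (Fin l) (Fin m) ℤ) (F' : Matrix (Fin n) (Fin m) ℤ),
      M' * T = M → F' * T = F →
      relLattice M' F' = relLattice M F ∧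
      ∀ v : Fin m → ℤ, inRowLattice (Matrix.fromRows M' F') v := by
  -- T is upper triangular with positive diagonal, hence nonsingular
  have hdet : T.det ≠ 0 := by
    have htri : T.BlockTriangular id := fun i j h => hT.1 i j h
    rw [Matrix.det_of_upperTriangular htri]
    exact ne_of_gt (Finset.prod_pos fun i _ => hT.2.1 i)
  -- every row of `fromRows M F` lies in the row lattice of T
  have hrow : ∀ r : Fin l ⊕ Fin n, ∃ q : Fin m → ℤ,
      Matrix.vecMul q T = Matrix.fromRows M F r := by
    intro r
    obtain ⟨q, hq⟩ := (hTlat (Matrix.fromRows M F r)).2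
      ⟨Pi.single r 1, (single_vecMul' _ r).symm⟩
    exact ⟨q, hq.symm⟩
  refine ⟨?_, ?_, ?_⟩
  · refine ⟨Matrix.of fun i => Classical.choose (hrow (Sum.inl i)), ?_⟩
    funext i j
    have := congr_fun (Classical.choose_spec (hrow (Sum.inl i))) j
    simpa [Matrix.mul_apply, Matrix.vecMul, dotProduct] using this
  · refine ⟨Matrix.of fun i => Classical.choose (hrow (Sum.inr i)), ?_⟩
    funext i j
    have := congr_fun (Classical.choose_spec (hrow (Sum.inr i))) j
    simpa [Matrix.mul_apply, Matrix.vecMul, dotProduct] using this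
  · intro M' F' hM' hF'
    constructor
    · ext p
      constructor
      · rintro ⟨q, hq⟩
        refine ⟨q, ?_⟩
        calc Matrix.vecMul p F = Matrix.vecMul p (F' * T) := by rw [hF']
          _ = Matrix.vecMul (Matrix.vecMul p F') T := (Matrix.vecMul_vecMul _ _ _).symm
          _ = Matrix.vecMul (Matrix.vecMul q M') T := by rw [hq]
          _ = Matrix.vecMul q (M' * T) := Matrix.vecMul_vecMul _ _ _
          _ = Matrix.vecMul q M := by rw [hM']
      · rintro ⟨q, hq⟩
        refine ⟨q, vecMul_cancel hdet ?_⟩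
        calc Matrix.vecMul (Matrix.vecMul p F') T
            = Matrix.vecMul p (F' * T) := Matrix.vecMul_vecMul _ _ _
          _ = Matrix.vecMul p F := by rw [hF']
          _ = Matrix.vecMul q M := hq
          _ = Matrix.vecMul q (M' * T) := by rw [hM']
          _ = Matrix.vecMul (Matrix.vecMul q M') T := (Matrix.vecMul_vecMul _ _ _).symm
    · -- the row lattice of fromRows M' F' is everything
      have hfr : Matrix.fromRows M' F' * T = Matrix.fromRows M F := by
        rw [Matrix.fromRows_mul, hM', hF']
      have hsingle : ∀ i : Fin m, ∃ q : Fin l ⊕ Fin n → ℤ,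
          Pi.single i 1 = Matrix.vecMul q (Matrix.fromRows M' F') := by
        intro i
        obtain ⟨q, hq⟩ := (hTlat (T i)).1 ⟨Pi.single i 1, (single_vecMul' T i).symm⟩
        refine ⟨q, vecMul_cancel hdet ?_⟩
        rw [single_vecMul' T i, Matrix.vecMul_vecMul, hfr, ← hq]
      intro v
      set R : Submodule ℤ (Fin m → ℤ) :=
        LinearMap.range (Matrix.fromRows M' F').vecMulLinear with hR
      have hmem : ∀ i : Fin m, (Pi.single i 1 : Fin m → ℤ) ∈ R := by
        intro i
        obtain ⟨q, hq⟩ := hsingle i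
        exact ⟨q, hq.symm⟩
      have hv : v ∈ R := by
        have : v = ∑ i : Fin m, v i • (Pi.single i 1 : Fin m → ℤ) := by
          funext j
          simp [Pi.single_apply, Finset.sum_ite_eq]
        rw [this]
        exact Submodule.sum_mem R fun i _ => Submodule.smul_mem R _ (hmem i)
      obtain ⟨q, hq⟩ := hv
      exact ⟨q, hq.symm⟩
end

section
/- Assume R(S, F) has coprime inputs, with S ∈ ℤ^{m×m} a nonsingular Smith form. Then, up to trivial invariant factors (factors equal to 1), the Smith form of any basis of R(S, F) equals S; in particular, if H is the Hermite basis of R(S,F) then |det H| = det S. -/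
open Matrix

lemma row_mul {n m l : Type*} [Fintype n] [Fintype m] [DecidableEq n]
    (A : Matrix n m ℤ) (B : Matrix m l ℤ) (i : n) :
    (A * B) i = Matrix.vecMul (A i) B := by
  rw [← row_apply' A i, ← single_one_vecMul i A, vecMul_vecMul, single_one_vecMul, row_apply']

lemma exists_left_factor {n l m : Type*} [Fintype n] [Fintype l] [Fintype m] [DecidableEq n]
    (A : Matrix n m ℤ) (B : Matrix l m ℤ) (h : ∀ i, inRowLattice B (A i)) :
    ∃ U : Matrix n l ℤ, U * B = A := by
  choose q hq using h
  refine ⟨Matrix.of q, ?_⟩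
  ext i j
  show (q i ᵥ* B) j = A i j
  rw [← hq i]

theorem stmt13 {m n : ℕ} (S : Matrix (Fin m) (Fin m) ℤ) (hS : IsSmithForm S)
    (F : Matrix (Fin n) (Fin m) ℤ)
    (hcop : ∃ W : Matrix (Fin m) (Fin n) ℤ, ∀ i j, S j j ∣ ((W * F - 1 : Matrix (Fin m) (Fin m) ℤ) i j)) :
    (∀ P : Matrix (Fin n) (Fin n) ℤ, IsBasisOf P (relLattice S F) →
      ∃ U V : Matrix (Fin n ⊕ Fin m) (Fin n ⊕ Fin m) ℤ,
        IsUnit U.det ∧ IsUnit V.det ∧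
        U * Matrix.fromBlocks (1 : Matrix (Fin n) (Fin n) ℤ) 0 0 S * V =
          Matrix.reindex (Equiv.sumComm (Fin m) (Fin n)) (Equiv.sumComm (Fin m) (Fin n))
            (Matrix.fromBlocks (1 : Matrix (Fin m) (Fin m) ℤ) 0 0 P)) ∧
    ∀ H : Matrix (Fin n) (Fin n) ℤ, IsHermiteForm H → IsBasisOf H (relLattice S F) →
      |H.det| = S.det := by
  obtain ⟨W, hW⟩ := hcop
  set E : Matrix (Fin m) (Fin m) ℤ := Matrix.of fun i j => ((W * F - 1 : Matrix (Fin m) (Fin m) ℤ) i j) / S j j with hEdef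
  have hE : W * F = 1 + E * S := by
    ext i j
    have h1 : (E * S) i j = E i j * S j j := by
      rw [Matrix.mul_apply]
      refine Finset.sum_eq_single j (fun k _ hk => by rw [hS.1 k j hk, mul_zero]) (by simp)
    have h2 : E i j * S j j = (W * F - 1 : Matrix (Fin m) (Fin m) ℤ) i j := Int.ediv_mul_cancel (hW i j)
    have := h2.trans (Matrix.sub_apply _ _ _ _)
    rw [Matrix.add_apply, h1, this]
    ring
  -- block matrices over Fin m ⊕ Fin n
  have main : ∀ P : Matrix (Fin n) (Fin n) ℤ, IsBasisOf P (relLattice S F) →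
      ∃ U V : Matrix (Fin m ⊕ Fin n) (Fin m ⊕ Fin n) ℤ,
        IsUnit U.det ∧ IsUnit V.det ∧
        U * Matrix.fromBlocks S 0 0 (1 : Matrix (Fin n) (Fin n) ℤ) * V =
          Matrix.fromBlocks (1 : Matrix (Fin m) (Fin m) ℤ) 0 0 P := by
    intro P hP
    set M₀ : Matrix (Fin m ⊕ Fin n) (Fin m ⊕ Fin n) ℤ := fromBlocks S 0 F 1 with hM₀
    set K₀ : Matrix (Fin m ⊕ Fin n) (Fin m ⊕ Fin n) ℤ := fromBlocks 1 W 0 P with hK₀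
    -- every row of K₀ is in the row lattice of M₀
    have hKM : ∀ i, inRowLattice M₀ (K₀ i) := by
      rintro (i | j)
      · refine ⟨Sum.elim (-(E i)) (W i), ?_⟩
        rw [hM₀, vecMul_fromBlocks]
        ext (k | k)
        · simp only [Sum.elim_inl, Sum.elim_comp_inl, Sum.elim_comp_inr, Pi.add_apply,
            neg_vecMul, Pi.neg_apply]
          have := congrFun (congrFun hE i) k
          rw [← row_mul W F i, ← row_mul E S i] at *
          have h1 : (W * F) i k = (1 : Matrix (Fin m) (Fin m) ℤ) i k + (E * S) i k := by
            rw [hE]; simp [Matrix.add_apply]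
          rw [row_mul W F i, row_mul E S i] at h1
          show K₀ (Sum.inl i) (Sum.inl k) = -(E i ᵥ* S) k + (W i ᵥ* F) k
          rw [hK₀]
          simp only [fromBlocks_apply₁₁]
          omega
        · show K₀ (Sum.inl i) (Sum.inr k) = _
          simp [hK₀, vecMul_one]
      · have hPmem : P j ∈ relLattice S F := (hP.2 (P j)).mp ⟨Pi.single j 1, by
          rw [single_one_vecMul, row_apply']⟩
        obtain ⟨a, ha⟩ := hPmem
        refine ⟨Sum.elim (-a) (P j), ?_⟩
        rw [hM₀, vecMul_fromBlocks]
        ext (k | k)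
        · show K₀ (Sum.inr j) (Sum.inl k) = _
          simp only [hK₀, fromBlocks_apply₂₁, Sum.elim_inl, Sum.elim_comp_inl,
            Sum.elim_comp_inr, Pi.add_apply, neg_vecMul, Pi.neg_apply, Matrix.zero_apply]
          have := congrFun ha k
          omega
        · show K₀ (Sum.inr j) (Sum.inr k) = _
          simp [hK₀, vecMul_one]
    -- every row of M₀ is in the row lattice of K₀
    have hMK : ∀ i, inRowLattice K₀ (M₀ i) := by
      rintro (i | j)
      · have hmem : (-(Matrix.vecMul (S i) W)) ∈ relLattice S F := by
          refine ⟨-(Pi.single i 1 + Matrix.vecMul (S i) E), ?_⟩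
          rw [neg_vecMul, neg_vecMul, vecMul_vecMul, hE, vecMul_add, vecMul_one, add_vecMul,
            single_one_vecMul, vecMul_vecMul, row_apply']
        obtain ⟨b, hb⟩ := (hP.2 _).mpr hmem
        refine ⟨Sum.elim (S i) b, ?_⟩
        rw [hK₀, vecMul_fromBlocks]
        ext (k | k)
        · show M₀ (Sum.inl i) (Sum.inl k) = _
          simp [hM₀, vecMul_one]
        · show M₀ (Sum.inl i) (Sum.inr k) = _
          have h3 := congrFun hb k
          simp only [Pi.neg_apply] at h3
          simp only [hM₀, fromBlocks_apply₁₂, Matrix.zero_apply, Sum.elim_inr,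
            Sum.elim_comp_inl, Sum.elim_comp_inr, Pi.add_apply]
          omega
      · have hmem : (Pi.single j 1 - Matrix.vecMul (F j) W) ∈ relLattice S F := by
          refine ⟨-(Matrix.vecMul (F j) E), ?_⟩
          show (Pi.single j 1 - F j ᵥ* W) ᵥ* F = _
          rw [sub_vecMul, single_one_vecMul, row_apply', vecMul_vecMul, hE, vecMul_add, vecMul_one,
            neg_vecMul, vecMul_vecMul]
          abel
        obtain ⟨b, hb⟩ := (hP.2 _).mpr hmem
        refine ⟨Sum.elim (F j) b, ?_⟩
        rw [hK₀, vecMul_fromBlocks]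
        ext (k | k)
        · show M₀ (Sum.inr j) (Sum.inl k) = _
          simp [hM₀, vecMul_one]
        · show M₀ (Sum.inr j) (Sum.inr k) = _
          have h3 := congrFun hb k
          simp only [Pi.sub_apply] at h3
          have h4 : (1 : Matrix (Fin n) (Fin n) ℤ) j k = (Pi.single j 1 : Fin n → ℤ) k := by
            simp [Matrix.one_apply, Pi.single_apply, eq_comm]
          simp only [hM₀, fromBlocks_apply₂₂, Sum.elim_inr, Sum.elim_comp_inl,
            Sum.elim_comp_inr, Pi.add_apply]
          omega
    -- factor each through the other
    obtain ⟨U₁, hU₁⟩ := exists_left_factor K₀ M₀ hKM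
    obtain ⟨U₂, hU₂⟩ := exists_left_factor M₀ K₀ hMK
    have hKne : K₀.det ≠ 0 := by
      rw [hK₀, det_fromBlocks_zero₂₁, det_one, one_mul]; exact hP.1
    have hUU : U₁ * U₂ = 1 := by
      have h : (U₁ * U₂) * K₀ = 1 * K₀ := by rw [one_mul, Matrix.mul_assoc, hU₂, hU₁]
      have h2 := congrArg (· * K₀.adjugate) h
      simp only [Matrix.mul_assoc, Matrix.mul_adjugate, Matrix.mul_smul, Matrix.mul_one] at h2
      ext i j
      have h3 := congrFun (congrFun h2 i) j
      simp only [Matrix.smul_apply, smul_eq_mul] at h3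
      exact mul_left_cancel₀ hKne h3
    have hu1 : IsUnit U₁.det :=
      IsUnit.of_mul_eq_one U₂.det (by rw [← Matrix.det_mul, hUU, det_one])
    set L : Matrix (Fin m ⊕ Fin n) (Fin m ⊕ Fin n) ℤ :=
      fromBlocks 1 0 F (1 : Matrix (Fin n) (Fin n) ℤ) with hLdef
    set R : Matrix (Fin m ⊕ Fin n) (Fin m ⊕ Fin n) ℤ :=
      fromBlocks 1 (-W) 0 (1 : Matrix (Fin n) (Fin n) ℤ) with hRdef
    have hL : fromBlocks S 0 0 (1 : Matrix (Fin n) (Fin n) ℤ) * L = M₀ := by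
      rw [hLdef, hM₀, fromBlocks_multiply]; simp
    have hR : K₀ * R = fromBlocks 1 0 0 P := by
      rw [hRdef, hK₀, fromBlocks_multiply]
      simp [Matrix.mul_neg]
    refine ⟨U₁, L * R, hu1, ?_, ?_⟩
    · rw [Matrix.det_mul, hLdef, hRdef, det_fromBlocks_zero₁₂, det_fromBlocks_zero₂₁]
      simp
    · have hstep : U₁ * (fromBlocks S 0 0 (1 : Matrix (Fin n) (Fin n) ℤ)) * (L * R)
          = U₁ * M₀ * R := by
        rw [Matrix.mul_assoc U₁, ← Matrix.mul_assoc _ L R, hL, Matrix.mul_assoc]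
      rw [hstep, hU₁, hR]
  constructor
  · intro P hP
    obtain ⟨U, V, hu, hv, heq⟩ := main P hP
    set σ := Equiv.sumComm (Fin m) (Fin n) with hσ
    refine ⟨reindex σ σ U, reindex σ σ V, by rwa [det_reindex_self],
      by rwa [det_reindex_self], ?_⟩
    have hswap : Matrix.fromBlocks (1 : Matrix (Fin n) (Fin n) ℤ) 0 0 S =
        reindex σ σ (fromBlocks S 0 0 (1 : Matrix (Fin n) (Fin n) ℤ)) := by
      ext (i | i) (j | j) <;> simp [hσ, reindex_apply, submatrix_apply]
    have hmul : ∀ A B : Matrix (Fin m ⊕ Fin n) (Fin m ⊕ Fin n) ℤ,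
        reindex σ σ A * reindex σ σ B = reindex σ σ (A * B) := by
      intro A B
      simp [reindex_apply, Matrix.submatrix_mul_equiv]
    rw [hswap, hmul, hmul, heq]
  · intro H _ hH
    obtain ⟨U, V, hu, hv, heq⟩ := main H hH
    have hdet : U.det * S.det * V.det = H.det := by
      have hd := congrArg Matrix.det heq
      rwa [Matrix.det_mul, Matrix.det_mul, det_fromBlocks_zero₂₁, det_fromBlocks_zero₂₁,
        det_one, det_one, mul_one, one_mul] at hd
    have hSpos : 0 < S.det := by
      have hdiag : S = Matrix.diagonal fun i => S i i := by
        ext i j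
        by_cases h : i = j
        · subst h; simp
        · rw [hS.1 i j h, Matrix.diagonal_apply_ne _ h]
      rw [hdiag, det_diagonal]
      exact Finset.prod_pos fun i _ => hS.2.1 i
    have hcase : H.det = S.det ∨ H.det = -S.det := by
      rcases Int.isUnit_iff.mp hu with h1 | h1 <;> rcases Int.isUnit_iff.mp hv with h2 | h2 <;>
        rw [h1, h2] at hdet <;> [left; right; right; left] <;> omega
    rcases hcase with h | h <;> rw [h]
    · exact abs_of_pos hSpos
    · rw [abs_neg]; exact abs_of_pos hSpos
end

section
/- Assume R(S, F) has coprime inputs with S a nonsingular m×m Smith form, and suppose the Hermite basis H of R(S,F) has the block shape diag-like form [[I_k, *, 0],[0, H̄, 0],[0, 0, I_{n−k−m'}]] with H̄ of size m'×m' (H is 'index (k, m')'). Then S has at most m' nontrivial invariant factors (invariant factors greater than 1). -/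
theorem stmt14 {m n k m' : ℕ} (S : Matrix (Fin m) (Fin m) ℤ) (hS : IsSmithForm S)
    (F : Matrix (Fin n) (Fin m) ℤ)
    (hcop : ∃ W : Matrix (Fin m) (Fin n) ℤ, ∀ i j, S j j ∣ ((W * F - 1 : Matrix (Fin m) (Fin m) ℤ) i j))
    (H : Matrix (Fin n) (Fin n) ℤ) (hH : IsHermiteForm H)
    (hbasis : IsBasisOf H (relLattice S F))
    (hkm : k + m' ≤ n)
    (hindex : ∀ i j : Fin n, ((j : ℕ) < k ∨ k + m' ≤ (j : ℕ)) →
      H i j = (1 : Matrix (Fin n) (Fin n) ℤ) i j) :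
    (Finset.univ.filter (fun i : Fin m => S i i ≠ 1)).card ≤ m' := by
  classical
  obtain ⟨W, hW⟩ := hcop
  set T : Finset (Fin m) := Finset.univ.filter (fun i : Fin m => S i i ≠ 1) with hTdef
  rcases T.eq_empty_or_nonempty with hTe | hTne
  · simp [hTe]
  set i0 : Fin m := T.min' hTne with hi0
  have hi0T : i0 ∈ T := T.min'_mem hTne
  have hi0ne : S i0 i0 ≠ 1 := by
    have := hi0T; simp only [hTdef, Finset.mem_filter] at this; exact this.2
  set p : ℕ := (S i0 i0).toNat with hp
  have hpos : 0 < S i0 i0 := hS.2.1 i0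
  have hpS : (p : ℤ) = S i0 i0 := Int.toNat_of_nonneg (le_of_lt hpos)
  have hp1 : 1 < p := by omega
  haveI : NeZero p := ⟨by omega⟩
  have hdvd : ∀ j : Fin m, S j j ≠ 1 → (p : ℤ) ∣ S j j := by
    intro j hj
    have hji : i0 ≤ j := T.min'_le j (by simp [hTdef, hj])
    rw [hpS]
    exact hS.2.2 i0 j hji
  -- coprimality mod p
  have fa : ∀ (i j : Fin m), S j j ≠ 1 →
      (∑ l : Fin n, ((W i l : ℤ) : ZMod p) * ((F l j : ℤ) : ZMod p))
        = if i = j then 1 else 0 := by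
    intro i j hj
    have h1 : (p : ℤ) ∣ (W * F) i j - (if i = j then 1 else 0) := by
      have h2 := (hdvd j hj).trans (hW i j)
      simpa [Matrix.sub_apply, Matrix.one_apply] using h2
    have h3 : (((W * F) i j : ℤ) : ZMod p)
        = (((if i = j then (1:ℤ) else 0) : ℤ) : ZMod p) := by
      have h4 := (ZMod.intCast_zmod_eq_zero_iff_dvd _ p).2 h1
      rw [Int.cast_sub] at h4
      exact sub_eq_zero.mp h4
    have h5 : (∑ l : Fin n, ((W i l : ℤ) : ZMod p) * ((F l j : ℤ) : ZMod p))
        = (((W * F) i j : ℤ) : ZMod p) := by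
      rw [Matrix.mul_apply, Int.cast_sum]
      simp [Int.cast_mul]
    rw [h5, h3]
    split <;> simp
  -- rows of H are relations mod p
  have fb : ∀ (i : Fin n) (j : Fin m), S j j ≠ 1 →
      (∑ l : Fin n, ((H i l : ℤ) : ZMod p) * ((F l j : ℤ) : ZMod p)) = 0 := by
    intro i j hj
    have hmem : H i ∈ relLattice S F := by
      apply (hbasis.2 (H i)).1
      refine ⟨Pi.single i 1, ?_⟩
      funext j'
      simp only [Matrix.vecMul, dotProduct, Pi.single_apply, ite_mul, one_mul,
        zero_mul]
      simp [Finset.sum_ite_eq']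
    obtain ⟨q, hq⟩ := hmem
    have hval : (∑ l : Fin n, H i l * F l j) = q j * S j j := by
      have h6 := congrFun hq j
      simp only [Matrix.vecMul, dotProduct] at h6
      rw [h6]
      refine Finset.sum_eq_single j (fun l' _ hne => ?_) (by simp)
      rw [hS.1 l' j hne, mul_zero]
    have h7 : (∑ l : Fin n, ((H i l : ℤ) : ZMod p) * ((F l j : ℤ) : ZMod p))
        = (((∑ l : Fin n, H i l * F l j : ℤ)) : ZMod p) := by
      rw [Int.cast_sum]; simp [Int.cast_mul]
    rw [h7, hval, Int.cast_mul, (ZMod.intCast_zmod_eq_zero_iff_dvd _ p).2 (hdvd j hj),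
      mul_zero]
  -- index shape mod p
  have fc : ∀ (i l : Fin n), ((l : ℕ) < k ∨ k + m' ≤ (l : ℕ)) →
      ((H i l : ℤ) : ZMod p) = if i = l then 1 else 0 := by
    intro i l h
    rw [hindex i l h, Matrix.one_apply]
    split <;> simp
  -- the surjection
  set G : (Fin m' → ZMod p) → ({j : Fin m // S j j ≠ 1} → ZMod p) :=
    fun c j => ∑ l : Fin n,
      (if h : k ≤ (l : ℕ) ∧ (l : ℕ) < k + m' then c ⟨(l : ℕ) - k, by omega⟩ else 0)
        * ((F l j.1 : ℤ) : ZMod p) with hG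
  have hGsurj : Function.Surjective G := by
    intro y
    set yt : Fin m → ZMod p := fun j => if h : S j j ≠ 1 then y ⟨j, h⟩ else 0 with hyt
    set x : Fin n → ZMod p := fun l => ∑ i : Fin m, yt i * ((W i l : ℤ) : ZMod p) with hx
    set u : Fin n → ZMod p := fun i =>
      if k ≤ (i : ℕ) ∧ (i : ℕ) < k + m' then 0 else x i with hu
    set x' : Fin n → ZMod p := fun l =>
      x l - ∑ i : Fin n, u i * ((H i l : ℤ) : ZMod p) with hx'
    have hA : ∀ j : {j : Fin m // S j j ≠ 1},
        (∑ l : Fin n, x l * ((F l j.1 : ℤ) : ZMod p)) = y j := by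
      intro j
      calc (∑ l : Fin n, x l * ((F l j.1 : ℤ) : ZMod p))
          = ∑ l : Fin n, ∑ i : Fin m,
              yt i * (((W i l : ℤ) : ZMod p) * ((F l j.1 : ℤ) : ZMod p)) := by
            refine Finset.sum_congr rfl fun l _ => ?_
            rw [hx, Finset.sum_mul]
            exact Finset.sum_congr rfl fun i _ => by ring
        _ = ∑ i : Fin m, yt i * ∑ l : Fin n,
              ((W i l : ℤ) : ZMod p) * ((F l j.1 : ℤ) : ZMod p) := by
            rw [Finset.sum_comm]
            exact Finset.sum_congr rfl fun i _ => by rw [Finset.mul_sum]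
        _ = ∑ i : Fin m, yt i * (if i = j.1 then 1 else 0) := by
            exact Finset.sum_congr rfl fun i _ => by rw [fa i j.1 j.2]
        _ = yt j.1 := by simp
        _ = y j := by simp [hyt, j.2]
    have hB : ∀ j : {j : Fin m // S j j ≠ 1},
        (∑ l : Fin n, x' l * ((F l j.1 : ℤ) : ZMod p)) = y j := by
      intro j
      have hz : (∑ l : Fin n, (∑ i : Fin n, u i * ((H i l : ℤ) : ZMod p))
          * ((F l j.1 : ℤ) : ZMod p)) = 0 := by
        calc (∑ l : Fin n, (∑ i : Fin n, u i * ((H i l : ℤ) : ZMod p))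
              * ((F l j.1 : ℤ) : ZMod p))
            = ∑ l : Fin n, ∑ i : Fin n,
                u i * (((H i l : ℤ) : ZMod p) * ((F l j.1 : ℤ) : ZMod p)) := by
              refine Finset.sum_congr rfl fun l _ => ?_
              rw [Finset.sum_mul]
              exact Finset.sum_congr rfl fun i _ => by ring
          _ = ∑ i : Fin n, u i * ∑ l : Fin n,
                ((H i l : ℤ) : ZMod p) * ((F l j.1 : ℤ) : ZMod p) := by
              rw [Finset.sum_comm]
              exact Finset.sum_congr rfl fun i _ => by rw [Finset.mul_sum]
          _ = 0 := by
              refine Finset.sum_eq_zero fun i _ => ?_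
              rw [fb i j.1 j.2, mul_zero]
      calc (∑ l : Fin n, x' l * ((F l j.1 : ℤ) : ZMod p))
          = (∑ l : Fin n, x l * ((F l j.1 : ℤ) : ZMod p))
            - (∑ l : Fin n, (∑ i : Fin n, u i * ((H i l : ℤ) : ZMod p))
              * ((F l j.1 : ℤ) : ZMod p)) := by
            rw [← Finset.sum_sub_distrib]
            exact Finset.sum_congr rfl fun l _ => by rw [hx', sub_mul]
        _ = y j := by rw [hz, sub_zero, hA j]
    have hC : ∀ l : Fin n, ¬(k ≤ (l : ℕ) ∧ (l : ℕ) < k + m') → x' l = 0 := by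
      intro l hl
      have hout : (l : ℕ) < k ∨ k + m' ≤ (l : ℕ) := by omega
      have hsum : (∑ i : Fin n, u i * ((H i l : ℤ) : ZMod p)) = u l := by
        calc (∑ i : Fin n, u i * ((H i l : ℤ) : ZMod p))
            = ∑ i : Fin n, u i * (if i = l then 1 else 0) := by
              exact Finset.sum_congr rfl fun i _ => by rw [fc i l hout]
          _ = u l := by simp
      show x l - (∑ i : Fin n, u i * ((H i l : ℤ) : ZMod p)) = 0
      rw [hsum]
      simp [hu, hl]
    refine ⟨fun a => x' ⟨k + (a : ℕ), by have := a.isLt; omega⟩, ?_⟩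
    funext j
    show (∑ l : Fin n,
      (if h : k ≤ (l : ℕ) ∧ (l : ℕ) < k + m'
        then x' ⟨k + ((l : ℕ) - k), by omega⟩ else 0)
        * ((F l j.1 : ℤ) : ZMod p)) = y j
    calc (∑ l : Fin n,
        (if h : k ≤ (l : ℕ) ∧ (l : ℕ) < k + m'
          then x' ⟨k + ((l : ℕ) - k), by omega⟩ else 0)
          * ((F l j.1 : ℤ) : ZMod p))
        = ∑ l : Fin n, x' l * ((F l j.1 : ℤ) : ZMod p) := by
          refine Finset.sum_congr rfl fun l _ => ?_
          congr 1
          by_cases hl : k ≤ (l : ℕ) ∧ (l : ℕ) < k + m'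
          · rw [dif_pos hl]
            exact congrArg x' (Fin.ext (by simp; omega))
          · rw [dif_neg hl, hC l hl]
      _ = y j := hB j
  have hcard := Fintype.card_le_of_surjective G hGsurj
  rw [Fintype.card_fun, Fintype.card_fun, ZMod.card, Fintype.card_fin] at hcard
  have hsub : Fintype.card {j : Fin m // S j j ≠ 1} = T.card := by
    rw [hTdef]; exact Fintype.card_subtype _
  rw [hsub] at hcard
  exact (Nat.pow_le_pow_iff_right hp1).mp hcard
end

section
/- Let M ∈ ℤ_{>0}^{n} be a vector of moduli (equivalently a nonsingular diagonal matrix), A ∈ ℤ^{n×n}, and b ∈ ℤ^{1×n}. Let H be the Hermite basis of R(diag(M), [−b; A]) ⊆ ℤ^{1×(n+1)} and write H = [[h, x_p],[0, H̄]] with h ∈ ℤ_{>0} and x_p ∈ ℤ^{1×n}. Then: (i) x_p A ≡ h·b (mod M, entrywise in each column); (ii) h is minimal positive such that x A ≡ h b mod M has an integer solution x; and (iii) the full solution set of x A ≡ h b mod M is { x_p + v H̄ : v ∈ ℤ^{1×n} }. -/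
theorem stmt19 {n : ℕ} (M : Fin n → ℤ) (hM : ∀ i, 0 < M i)
    (A : Matrix (Fin n) (Fin n) ℤ) (b : Fin n → ℤ)
    (h : ℤ) (xp : Fin n → ℤ) (Hbar : Matrix (Fin n) (Fin n) ℤ)
    (hh : 0 < h) (hHbar : IsHermiteForm Hbar)
    (hxp : ∀ j, 0 ≤ xp j ∧ xp j < Hbar j j)
    (H : Matrix (Unit ⊕ Fin n) (Unit ⊕ Fin n) ℤ)
    (hHdef : H = Matrix.fromBlocks (Matrix.of fun _ _ => h) (Matrix.of fun _ j => xp j) 0 Hbar)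
    (F : Matrix (Unit ⊕ Fin n) (Fin n) ℤ)
    (hFdef : F = Matrix.fromRows (Matrix.of fun (_ : Unit) j => -b j) A)
    (hdet : H.det ≠ 0)
    (hbasis : ∀ v : (Unit ⊕ Fin n) → ℤ,
      inRowLattice H v ↔ v ∈ relLattice (Matrix.diagonal M) F) :
    (∀ j, M j ∣ Matrix.vecMul xp A j - h * b j) ∧
    (∀ h' : ℤ, 0 < h' →
      (∃ x : Fin n → ℤ, ∀ j, M j ∣ Matrix.vecMul x A j - h' * b j) → h ≤ h') ∧
    (∀ x : Fin n → ℤ, (∀ j, M j ∣ Matrix.vecMul x A j - h * b j) ↔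
      ∃ v : Fin n → ℤ, x = xp + Matrix.vecMul v Hbar) := by
  subst hHdef hFdef
  -- divisibility characterization of the diagonal row lattice
  have hdiag : ∀ w : Fin n → ℤ, inRowLattice (Matrix.diagonal M) w ↔ ∀ j, M j ∣ w j := by
    intro w
    constructor
    · rintro ⟨q, rfl⟩ j
      rw [Matrix.vecMul_diagonal]
      exact dvd_mul_left _ _
    · intro hdvd
      refine ⟨fun j => w j / M j, ?_⟩
      funext j
      rw [Matrix.vecMul_diagonal]
      exact (Int.ediv_mul_cancel (hdvd j)).symm
  -- vecMul against F
  have hF : ∀ (p : Unit ⊕ Fin n → ℤ) (j : Fin n),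
      Matrix.vecMul p (Matrix.fromRows (Matrix.of fun (_ : Unit) j => -b j) A) j
        = Matrix.vecMul (p ∘ Sum.inr) A j - p (Sum.inl ()) * b j := by
    intro p j
    simp [Matrix.vecMul, dotProduct, Fintype.sum_sum_type]
    ring
  -- vecMul against H
  have hHl : ∀ (q : Unit ⊕ Fin n → ℤ),
      Matrix.vecMul q (Matrix.fromBlocks (Matrix.of fun _ _ => h) (Matrix.of fun _ j => xp j) 0 Hbar)
        (Sum.inl ()) = q (Sum.inl ()) * h := by
    intro q
    simp [Matrix.vecMul, dotProduct, Fintype.sum_sum_type]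
  have hHr : ∀ (q : Unit ⊕ Fin n → ℤ) (j : Fin n),
      Matrix.vecMul q (Matrix.fromBlocks (Matrix.of fun _ _ => h) (Matrix.of fun _ j => xp j) 0 Hbar)
        ((Sum.inr j : Unit ⊕ Fin n)) = q (Sum.inl ()) * xp j + Matrix.vecMul (q ∘ Sum.inr) Hbar j := by
    intro q j
    simp [Matrix.vecMul, dotProduct, Fintype.sum_sum_type]
  -- membership characterization
  have hmem : ∀ (c : ℤ) (x : Fin n → ℤ),
      (Sum.elim (fun _ => c) x ∈ relLattice (Matrix.diagonal M)
        (Matrix.fromRows (Matrix.of fun (_ : Unit) j => -b j) A))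
        ↔ ∀ j, M j ∣ Matrix.vecMul x A j - c * b j := by
    intro c x
    rw [relLattice, Set.mem_setOf_eq, hdiag]
    constructor
    · intro hd j
      have := hd j
      rwa [hF] at this
    · intro hd j
      rw [hF]
      exact hd j
  refine ⟨?_, ?_, ?_⟩
  · -- part (i)
    intro j
    have hmem1 : inRowLattice
        ((Matrix.fromBlocks (Matrix.of fun _ _ => h) (Matrix.of fun _ j => xp j) 0 Hbar :
          Matrix (Unit ⊕ Fin n) (Unit ⊕ Fin n) ℤ))
        (Sum.elim (fun _ => h) xp) := by
      refine ⟨Sum.elim (fun _ => 1) 0, ?_⟩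
      funext k
      rcases k with u | j
      · cases u; rw [hHl]; simp
      · rw [hHr]; simp [Matrix.vecMul]
    have := (hbasis _).mp hmem1
    exact (hmem h xp).mp this j
  · -- part (ii)
    rintro h' hh' ⟨x, hx⟩
    obtain ⟨q, hq⟩ := (hbasis _).mpr ((hmem h' x).mpr hx)
    have hql : h' = q (Sum.inl ()) * h := by
      have := congrFun hq (Sum.inl ())
      rwa [hHl] at this
    have hdvd : h ∣ h' := Dvd.intro _ (by linarith [hql])
    exact Int.le_of_dvd hh' hdvd
  · -- part (iii)
    intro x
    constructor
    · intro hx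
      obtain ⟨q, hq⟩ := (hbasis _).mpr ((hmem h x).mpr hx)
      have hql : h = q (Sum.inl ()) * h := by
        have := congrFun hq (Sum.inl ())
        rwa [hHl] at this
      have hq1 : q (Sum.inl ()) = 1 := by
        have : (q (Sum.inl ()) - 1) * h = 0 := by ring_nf; linarith [hql]
        rcases mul_eq_zero.mp this with h1 | h2
        · linarith
        · exact absurd h2 (ne_of_gt hh)
      refine ⟨q ∘ Sum.inr, ?_⟩
      funext j
      have := congrFun hq (Sum.inr j)
      rw [hHr, hq1, one_mul] at this
      simpa using this
    · rintro ⟨v, rfl⟩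
      refine (hmem h _).mp ((hbasis _).mp ?_)
      refine ⟨Sum.elim (fun _ => 1) v, ?_⟩
      funext k
      rcases k with u | j
      · cases u; rw [hHl]; simp
      · rw [hHr]
        simp [Matrix.vecMul, dotProduct]
end
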